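/- arXiv:2411.09086 — 3 statements merged into one kernel-verified Lean document; each statement's English description precedes it below -/
import Mathlib

section
/- For a weak simple k-wave with midpoint ū = W_k(u_-, ζ/2) and endpoints u_∓ = W_k(ū, ∓ζ/2), the flux and conserved-quantity jumps satisfy [f] = λ_k(ū)[q] + O(ζ³) as ζ → 0, where [q] = q(u_+) - q(u_-) and [f] = f(u_+) - f(u_-). Consequently the least squared speed satisfies s_* = λ_k(ū) + O(ζ²) and the minimal residual satisfies R_* = O(ζ³). -/
/-!
Write `[g](t) = g t - g (-t)` for the jump across a wave of half-width `t = ζ/2` and put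
`Φ = [f] - λ(0) [q]`. Then `Φ 0 = 0` and
`Φ'(t) = (λ t - λ 0) q'(t) + (λ (-t) - λ 0) q'(-t)`; the first-order terms of the two summands
cancel by symmetry, leaving two products of `O(t)` increments and the second difference
`λ t + λ (-t) - 2 λ 0 = O(t²)`, so `Φ' = O(t²)` and `Φ = O(t³)`.
The least-squares speed makes `[f] - s_* [q]` orthogonal to `[q]`, so by Pythagoras both the
residual and `|s_* - λ 0| ‖[q]‖` are at most `‖Φ‖ = O(ζ³)`; as `q'(0) ≠ 0`, `‖[q]‖` is of
exact order `ζ`, which gives `s_* - λ 0 = O(ζ²)`.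
-/

open Asymptotics Filter Topology

section Calculus

variable {E : Type*} [NormedAddCommGroup E] [NormedSpace ℝ E]

theorem isBigO_pow_succ_of_hasDerivAt {ψ ψ' : ℝ → E} {n : ℕ} (h0 : ψ 0 = 0)
    (hψ : ∀ x, HasDerivAt ψ (ψ' x) x) (hψ' : ψ' =O[𝓝 0] (· ^ n)) :
    ψ =O[𝓝 0] (· ^ (n + 1)) := by
  obtain ⟨C, hC0, hC⟩ := hψ'.exists_pos
  obtain ⟨δ, hδ, hball⟩ := Metric.eventually_nhds_iff.1 hC.bound
  refine isBigO_iff.2 ⟨C, Metric.eventually_nhds_iff.2 ⟨δ, hδ, fun x hx => ?_⟩⟩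
  have hbound : ∀ t ∈ Set.uIcc 0 x, ‖ψ' t‖ ≤ C * |x| ^ n := by
    intro t ht
    have htx : |t| ≤ |x| := by simpa using Set.abs_sub_left_of_mem_uIcc ht
    calc ‖ψ' t‖ ≤ C * |t| ^ n := by
          simpa using hball (by simpa using htx.trans_lt (by simpa using hx))
      _ ≤ C * |x| ^ n := by gcongr
  have := (convex_uIcc 0 x).norm_image_sub_le_of_norm_hasDerivWithin_le
    (fun t _ => (hψ t).hasDerivWithinAt) hbound Set.left_mem_uIcc Set.right_mem_uIcc
  simpa [h0, pow_succ, mul_assoc] using this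

theorem HasDerivAt.isBigO_sub_zero_rev {g : ℝ → E} {g' : E} (hg : HasDerivAt g g' 0)
    (hg' : g' ≠ 0) : (fun x => x) =O[𝓝 0] fun x => g x - g 0 := by
  have hpair : Tendsto (fun x : ℝ => (x, (0 : ℝ))) (𝓝 0) (𝓝 0 ×ˢ pure 0) :=
    tendsto_id.prodMk tendsto_const_pure
  simpa [Function.comp_def] using (hg.isTheta_sub hg').isBigO_symm.comp_tendsto hpair

theorem DifferentiableAt.isBigO_sub_zero {g : ℝ → E} (hg : DifferentiableAt ℝ g 0) :
    (fun t => g t - g 0) =O[𝓝 0] fun t => t := by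
  simpa using hg.isBigO_sub

theorem DifferentiableAt.isBigO_comp_neg_sub_zero {g : ℝ → E} (hg : DifferentiableAt ℝ g 0) :
    (fun t => g (-t) - g 0) =O[𝓝 0] fun t => t := by
  simpa using (differentiableAt_comp_neg.2 (by simpa using hg)).isBigO_sub_zero

theorem isBigO_sq_add_comp_neg_sub_two_smul {g : ℝ → E} (hg : Differentiable ℝ g)
    (hg' : DifferentiableAt ℝ (deriv g) 0) :
    (fun t => g t + g (-t) - (2 : ℝ) • g 0) =O[𝓝 0] (· ^ 2) := by
  refine isBigO_pow_succ_of_hasDerivAt (ψ' := fun t => deriv g t - deriv g (-t))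
    (by simp; module) (fun t => ?_) ?_
  · have hneg := (hg (-t)).hasDerivAt.scomp t (hasDerivAt_neg t)
    exact (((hg t).hasDerivAt.add hneg).sub_const _).congr_deriv (by simp [sub_eq_add_neg])
  · refine (hg'.isBigO_sub_zero.sub hg'.isBigO_comp_neg_sub_zero).congr' ?_ ?_ <;>
      exact Eventually.of_forall fun t => by simp

/-- The jump `[g]` across a wave parametrised symmetrically about its midpoint `0`, as a function
of the half-width `t`. -/
def symmJump (g : ℝ → E) (t : ℝ) : E := g t - g (-t)

theorem HasDerivAt.symmJump {g : ℝ → E} {a b : E} {t : ℝ} (ha : HasDerivAt g a t)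
    (hb : HasDerivAt g b (-t)) : HasDerivAt (symmJump g) (a + b) t :=
  (ha.sub (hb.scomp t (hasDerivAt_neg t))).congr_deriv (by simp)

theorem symmJump_sub_smul_isBigO_cube {F q q' : ℝ → E} {lam : ℝ → ℝ}
    (hq : ∀ z, HasDerivAt q (q' z) z) (hq' : DifferentiableAt ℝ q' 0)
    (hlam : Differentiable ℝ lam) (hlam' : DifferentiableAt ℝ (deriv lam) 0)
    (hF : ∀ z, HasDerivAt F (lam z • q' z) z) :
    (fun t => symmJump F t - lam 0 • symmJump q t) =O[𝓝 0] (· ^ 3) := by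
  refine isBigO_pow_succ_of_hasDerivAt
    (ψ' := fun t => (lam t - lam 0) • q' t + (lam (-t) - lam 0) • q' (-t))
    (by simp [symmJump]) (fun t => ?_) ?_
  · exact (((hF t).symmJump (hF (-t))).sub
      (((hq t).symmJump (hq (-t))).const_smul (lam 0))).congr_deriv (by module)
  have hsq : ∀ t : ℝ, t • t = t ^ 2 := fun t => by simp [sq]
  have hplus := (hlam.differentiableAt.isBigO_sub_zero.smul hq'.isBigO_sub_zero).congr_right hsq
  have hminus := (hlam.differentiableAt.isBigO_comp_neg_sub_zero.smul
    hq'.isBigO_comp_neg_sub_zero).congr_right hsq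
  have hmid : (fun t => (lam t + lam (-t) - (2 : ℝ) • lam 0) • q' 0) =O[𝓝 0] (· ^ 2) :=
    ((isBigO_sq_add_comp_neg_sub_two_smul hlam hlam').smul
      (isBigO_const_const (q' 0) (one_ne_zero (α := ℝ)) (𝓝 (0 : ℝ)))).congr_right fun t => by simp
  refine ((hplus.add hminus).add hmid).congr_left fun t => ?_
  module

end Calculus

theorem Asymptotics.IsBigO.comp_div_const {E : Type*} [NormedAddCommGroup E] {f : ℝ → E} {n : ℕ}
    (h : f =O[𝓝 0] (· ^ n)) (c : ℝ) : (fun x => f (x / c)) =O[𝓝 0] (· ^ n) := by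
  have hc : Tendsto (· / c) (𝓝 (0 : ℝ)) (𝓝 0) := by
    simpa using (continuous_id.div_const c).tendsto 0
  refine (h.comp_tendsto hc).trans ?_
  simpa [Function.comp_def, div_eq_inv_mul, mul_pow, inv_pow] using
    (isBigO_refl (fun x : ℝ => x ^ n) (𝓝 0)).const_mul_left ((c ^ n)⁻¹)

theorem isBigO_pow_of_mul_isBigO_pow_succ {𝕜 : Type*} [NormedField 𝕜] {g : 𝕜 → 𝕜} {n : ℕ}
    (h : (fun x => x * g x) =O[𝓝[≠] 0] (· ^ (n + 1))) : g =O[𝓝[≠] 0] (· ^ n) := by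
  refine ((isBigO_refl (fun x : 𝕜 => x⁻¹) _).mul h).congr' ?_ ?_ <;>
    filter_upwards [self_mem_nhdsWithin] with x (hx : x ≠ 0)
  · field_simp
  · field_simp
    ring

section LeastSquares

variable {E : Type*} [NormedAddCommGroup E] [InnerProductSpace ℝ E]

/-- The paper's least-squares speed `s_*`, minimising `μ ↦ ‖f - μ • q‖`; it is `0` when `q = 0`. -/
noncomputable def leastSquaresSpeed (q f : E) : ℝ := inner ℝ q f / ‖q‖ ^ 2

theorem norm_sub_smul_sq_eq_leastSquares (q f : E) (μ : ℝ) :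
    ‖f - μ • q‖ ^ 2 =
      ‖f - leastSquaresSpeed q f • q‖ ^ 2 + (leastSquaresSpeed q f - μ) ^ 2 * ‖q‖ ^ 2 := by
  set s := leastSquaresSpeed q f
  have horth : inner ℝ (f - s • q) ((s - μ) • q) = 0 := by
    rcases eq_or_ne q 0 with rfl | hq
    · simp
    have hq2 : ‖q‖ ^ 2 ≠ 0 := by positivity
    rw [inner_smul_right, inner_sub_left, real_inner_smul_left, real_inner_self_eq_norm_sq,
      real_inner_comm, show s = inner ℝ q f / ‖q‖ ^ 2 from rfl, div_mul_cancel₀ _ hq2, sub_self,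
      mul_zero]
  have hsplit : f - μ • q = (f - s • q) + (s - μ) • q := by module
  rw [hsplit, norm_add_sq_real, horth, mul_zero, add_zero, norm_smul, mul_pow, Real.norm_eq_abs,
    sq_abs]

theorem norm_sub_leastSquaresSpeed_smul_le (q f : E) (μ : ℝ) :
    ‖f - leastSquaresSpeed q f • q‖ ≤ ‖f - μ • q‖ := by
  refine (pow_le_pow_iff_left₀ (norm_nonneg _) (norm_nonneg _) two_ne_zero).1 ?_
  rw [norm_sub_smul_sq_eq_leastSquares q f μ]
  exact le_add_of_nonneg_right (by positivity)

theorem abs_leastSquaresSpeed_sub_mul_norm_le (q f : E) (μ : ℝ) :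
    |leastSquaresSpeed q f - μ| * ‖q‖ ≤ ‖f - μ • q‖ := by
  refine (pow_le_pow_iff_left₀ (by positivity) (norm_nonneg _) two_ne_zero).1 ?_
  rw [norm_sub_smul_sq_eq_leastSquares q f μ, mul_pow, sq_abs]
  exact le_add_of_nonneg_left (by positivity)

end LeastSquares

/-- For a weak simple wave parameterized symmetrically about the midpoint `ū = u(0)`:
`[f] = λ(ū)[q] + O(ζ³)`, the least squared speed satisfies `s_* = λ(ū) + O(ζ²)`,
and the minimal residual satisfies `R_* = O(ζ³)`. -/
theorem weak_simple_wave_expansion {N : ℕ}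
    (qc fc : ℝ → EuclideanSpace ℝ (Fin N)) (lam : ℝ → ℝ)
    (hq : ContDiff ℝ 2 qc) (hlam : ContDiff ℝ 2 lam)
    (hf : ∀ z, HasDerivAt fc (lam z • deriv qc z) z)
    (hq0 : deriv qc 0 ≠ 0) :
    (Asymptotics.IsBigO (nhds (0:ℝ))
      (fun ζ : ℝ => fc (ζ/2) - fc (-(ζ/2)) - lam 0 • (qc (ζ/2) - qc (-(ζ/2))))
      (fun ζ => ζ^3)) ∧
    (Asymptotics.IsBigO (nhdsWithin (0:ℝ) {0}ᶜ)
      (fun ζ : ℝ =>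
        (inner ℝ (qc (ζ/2) - qc (-(ζ/2))) (fc (ζ/2) - fc (-(ζ/2))) : ℝ)
          / ‖qc (ζ/2) - qc (-(ζ/2))‖^2 - lam 0)
      (fun ζ => ζ^2)) ∧
    (Asymptotics.IsBigO (nhdsWithin (0:ℝ) {0}ᶜ)
      (fun ζ : ℝ => fc (ζ/2) - fc (-(ζ/2)) -
        ((inner ℝ (qc (ζ/2) - qc (-(ζ/2))) (fc (ζ/2) - fc (-(ζ/2))) : ℝ)
          / ‖qc (ζ/2) - qc (-(ζ/2))‖^2) • (qc (ζ/2) - qc (-(ζ/2))))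
      (fun ζ => ζ^3)) := by
  have hqd : Differentiable ℝ qc := hq.differentiable (by norm_num)
  set Δq := fun ζ : ℝ => symmJump qc (ζ / 2)
  set Δf := fun ζ : ℝ => symmJump fc (ζ / 2)
  have hflux : (fun ζ => Δf ζ - lam 0 • Δq ζ) =O[𝓝 0] (· ^ 3) :=
    (symmJump_sub_smul_isBigO_cube (fun z => (hqd z).hasDerivAt) (hq.differentiable_deriv_two 0)
      (hlam.differentiable (by norm_num)) (hlam.differentiable_deriv_two 0) hf).comp_div_const 2
  have hΔq : (fun ζ => ζ) =O[𝓝 0] Δq := by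
    have hd := ((hqd 0).hasDerivAt.symmJump (hqd (-0)).hasDerivAt).scomp_of_eq (0 : ℝ)
      ((hasDerivAt_id (0 : ℝ)).div_const 2) (by simp)
    simpa [Δq, symmJump] using hd.isBigO_sub_zero_rev (by simpa [← add_smul] using hq0)
  refine ⟨hflux, isBigO_pow_of_mul_isBigO_pow_succ ?_, ?_⟩
  · have hspeed :
        (fun ζ => ‖Δq ζ‖ * (leastSquaresSpeed (Δq ζ) (Δf ζ) - lam 0)) =O[𝓝 0] (· ^ 3) := by
      refine (isBigO_of_le _ fun ζ => ?_).trans hflux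
      simpa [abs_mul, mul_comm] using abs_leastSquaresSpeed_sub_mul_norm_le (Δq ζ) (Δf ζ) (lam 0)
    exact ((hΔq.norm_right.mul (isBigO_refl _ _)).trans hspeed).mono nhdsWithin_le_nhds
  · exact ((isBigO_of_le _ fun ζ => norm_sub_leastSquaresSpeed_smul_le (Δq ζ) (Δf ζ) (lam 0)).trans
      hflux).mono nhdsWithin_le_nhds
end

section
/- Define for p_a ≠ p_b the signed scalar residual √2 R_*(p_a, p_b) = I_1(p_a,p_b)²/I_2(p_a,p_b) + p_a - p_b, where I_k(a,b) = ∫_{p_a}^{p_b} c(p)^{-k} dp. Then for any p_m strictly between p_a and p_b, √2(R_*(p_a,p_m) + R_*(p_m,p_b) - R_*(p_a,p_b)) = (I_1(a,m) I_2(m,b) - I_1(m,b) I_2(a,m))² / (I_2(a,m) I_2(m,b) (I_2(a,m) + I_2(m,b))), and the split residual strictly decreases in absolute value: |R_*(p_a,p_m) + R_*(p_m,p_b)| < |R_*(p_a,p_b)| whenever c is non-constant on the interval. -/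
/-!
Write `xᵢ = I₁` and `yᵢ = I₂` on the two halves `[a, m]`, `[m, b]`. Since `I_k` is additive, the
change of the scaled residual under splitting is the defect
`x₁²/y₁ + x₂²/y₂ - (x₁ + x₂)²/(y₁ + y₂) = (x₁ y₂ - x₂ y₁)² / (y₁ y₂ (y₁ + y₂))`.
For `a < b`, Cauchy–Schwarz gives `I₁² ≤ (b - a) I₂`, so every residual is nonpositive, and the
defect is strictly positive: `I₁ / I₂` is the `c⁻²`-weighted mean of `c`, and by strict
monotonicity the means on `[a, m]` and `[m, b]` lie on opposite sides of `c m`. So the unsplit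
residual is the sum of the two split ones minus a positive number. The case `b < a` follows
because the residual is antisymmetric in `(a, b)`.
-/

open intervalIntegral Set
open MeasureTheory (volume)

theorem sq_intervalIntegral_le_mul_integral_sq {f : ℝ → ℝ} {a b : ℝ} (hab : a ≤ b)
    (hf : IntervalIntegrable f volume a b)
    (hf2 : IntervalIntegrable (fun x => f x ^ 2) volume a b) :
    (∫ x in a..b, f x) ^ 2 ≤ (b - a) * ∫ x in a..b, f x ^ 2 := by
  have hquad (t : ℝ) : 0 ≤ (b - a) * (t * t) + (-2 * ∫ x in a..b, f x) * t
      + ∫ x in a..b, f x ^ 2 := by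
    have hexpand : ∫ x in a..b, (f x - t) ^ 2
        = (b - a) * (t * t) + (-2 * ∫ x in a..b, f x) * t + ∫ x in a..b, f x ^ 2 := by
      have h : (fun x => (f x - t) ^ 2) = fun x => f x ^ 2 - 2 * t * f x + t * t := by
        funext x; ring
      rw [h, integral_add (hf2.sub (hf.const_mul _)) intervalIntegrable_const,
        integral_sub hf2 (hf.const_mul _), integral_const_mul, integral_const, smul_eq_mul]
      ring
    rw [← hexpand]
    exact integral_nonneg hab fun _ _ => sq_nonneg _
  have hdiscrim := discrim_le_zero hquad
  rw [discrim] at hdiscrim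
  nlinarith

noncomputable def invPowIntegral (c : ℝ → ℝ) (k : ℕ) (a b : ℝ) : ℝ :=
  ∫ p in a..b, (c p) ^ (-(k : ℤ))

/-- `√2 R_*(a, b)`: the signed residual without its normalising factor `1 / √2`. -/
noncomputable def jumpResidual (c : ℝ → ℝ) (a b : ℝ) : ℝ :=
  invPowIntegral c 1 a b ^ 2 / invPowIntegral c 2 a b + a - b

section Moments

variable {c : ℝ → ℝ}

theorem continuousOn_zpow_of_pos (hc : Continuous c) (hpos : ∀ p > 0, 0 < c p) (k : ℤ)
    {a b : ℝ} (ha : 0 < a) (hb : 0 < b) : ContinuousOn (fun p => c p ^ k) (uIcc a b) :=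
  hc.continuousOn.zpow₀ k fun _ hp => Or.inl (hpos _ ((lt_min ha hb).trans_le hp.1)).ne'

theorem invPowIntegral_add_adjacent (hc : Continuous c) (hpos : ∀ p > 0, 0 < c p) (k : ℕ)
    {a m b : ℝ} (ha : 0 < a) (hm : 0 < m) (hb : 0 < b) :
    invPowIntegral c k a m + invPowIntegral c k m b = invPowIntegral c k a b :=
  integral_add_adjacent_intervals (continuousOn_zpow_of_pos hc hpos _ ha hm).intervalIntegrable
    (continuousOn_zpow_of_pos hc hpos _ hm hb).intervalIntegrable

theorem invPowIntegral_swap (c : ℝ → ℝ) (k : ℕ) (a b : ℝ) :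
    invPowIntegral c k b a = -invPowIntegral c k a b :=
  integral_symm a b

theorem invPowIntegral_pos (hc : Continuous c) (hpos : ∀ p > 0, 0 < c p) (k : ℕ)
    {a b : ℝ} (ha : 0 < a) (hab : a < b) : 0 < invPowIntegral c k a b :=
  intervalIntegral_pos_of_pos_on
    (continuousOn_zpow_of_pos hc hpos _ ha (ha.trans hab)).intervalIntegrable
    (fun p hp => zpow_pos (hpos p (ha.trans hp.1)) _) hab

theorem invPowIntegral_ne_zero (hc : Continuous c) (hpos : ∀ p > 0, 0 < c p) (k : ℕ)
    {a b : ℝ} (ha : 0 < a) (hb : 0 < b) (hab : a ≠ b) : invPowIntegral c k a b ≠ 0 := by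
  rcases hab.lt_or_gt with hab | hab
  · exact (invPowIntegral_pos hc hpos k ha hab).ne'
  · rw [invPowIntegral_swap]
    exact neg_ne_zero.mpr (invPowIntegral_pos hc hpos k hb hab).ne'

theorem invPowIntegral_one_sq_le (hc : Continuous c) (hpos : ∀ p > 0, 0 < c p)
    {a b : ℝ} (ha : 0 < a) (hab : a ≤ b) :
    invPowIntegral c 1 a b ^ 2 ≤ (b - a) * invPowIntegral c 2 a b := by
  have hb := ha.trans_le hab
  have hsq : invPowIntegral c 2 a b = ∫ p in a..b, (c p ^ (-1 : ℤ)) ^ 2 := by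
    refine integral_congr fun p _ => ?_
    rw [← zpow_natCast, ← zpow_mul]
    rfl
  rw [hsq]
  exact sq_intervalIntegral_le_mul_integral_sq hab
    (continuousOn_zpow_of_pos hc hpos _ ha hb).intervalIntegrable
    ((continuousOn_zpow_of_pos hc hpos _ ha hb).pow 2).intervalIntegrable

theorem invPowIntegral_one_eq (hpos : ∀ p > 0, 0 < c p) {a b : ℝ} (ha : 0 < a) (hb : 0 < b) :
    invPowIntegral c 1 a b = ∫ p in a..b, c p * c p ^ (-2 : ℤ) := by
  refine integral_congr fun p hp => ?_
  have hcp : c p ≠ 0 := (hpos p ((lt_min ha hb).trans_le hp.1)).ne'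
  simp only [Nat.cast_one]
  rw [← zpow_one_add₀ hcp]
  norm_num

theorem invPowIntegral_one_lt_mul (hc : Continuous c) (hpos : ∀ p > 0, 0 < c p)
    (hmono : StrictMonoOn c (Ioi 0)) {a b : ℝ} (ha : 0 < a) (hab : a < b) :
    invPowIntegral c 1 a b < c b * invPowIntegral c 2 a b := by
  have hb := ha.trans hab
  have hw := continuousOn_zpow_of_pos hc hpos (-2) ha hb
  rw [uIcc_of_le hab.le] at hw
  rw [invPowIntegral_one_eq hpos ha hb, invPowIntegral, ← integral_const_mul]
  refine integral_lt_integral_of_continuousOn_of_le_of_exists_lt hab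
    (hc.continuousOn.mul hw) (continuousOn_const.mul hw) (fun p hp => ?_)
    ⟨a, left_mem_Icc.2 hab.le, ?_⟩
  · exact mul_le_mul_of_nonneg_right (hmono.monotoneOn (ha.trans hp.1) hb hp.2)
      (zpow_pos (hpos p (ha.trans hp.1)) _).le
  · exact mul_lt_mul_of_pos_right (hmono ha hb hab) (zpow_pos (hpos a ha) _)

theorem mul_lt_invPowIntegral_one (hc : Continuous c) (hpos : ∀ p > 0, 0 < c p)
    (hmono : StrictMonoOn c (Ioi 0)) {a b : ℝ} (ha : 0 < a) (hab : a < b) :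
    c a * invPowIntegral c 2 a b < invPowIntegral c 1 a b := by
  have hb := ha.trans hab
  have hw := continuousOn_zpow_of_pos hc hpos (-2) ha hb
  rw [uIcc_of_le hab.le] at hw
  rw [invPowIntegral_one_eq hpos ha hb, invPowIntegral, ← integral_const_mul]
  refine integral_lt_integral_of_continuousOn_of_le_of_exists_lt hab
    (continuousOn_const.mul hw) (hc.continuousOn.mul hw) (fun p hp => ?_)
    ⟨b, right_mem_Icc.2 hab.le, ?_⟩
  · exact mul_le_mul_of_nonneg_right (hmono.monotoneOn ha (ha.trans hp.1) hp.1.le)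
      (zpow_pos (hpos p (ha.trans hp.1)) _).le
  · exact mul_lt_mul_of_pos_right (hmono ha hb hab) (zpow_pos (hpos b hb) _)

theorem invPowIntegral_mul_lt_mul (hc : Continuous c) (hpos : ∀ p > 0, 0 < c p)
    (hmono : StrictMonoOn c (Ioi 0)) {a m b : ℝ} (ha : 0 < a) (ham : a < m) (hmb : m < b) :
    invPowIntegral c 1 a m * invPowIntegral c 2 m b
      < invPowIntegral c 1 m b * invPowIntegral c 2 a m := by
  have hm := ha.trans ham
  calc invPowIntegral c 1 a m * invPowIntegral c 2 m b
      < c m * invPowIntegral c 2 a m * invPowIntegral c 2 m b :=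
        mul_lt_mul_of_pos_right (invPowIntegral_one_lt_mul hc hpos hmono ha ham)
          (invPowIntegral_pos hc hpos 2 hm hmb)
    _ = c m * invPowIntegral c 2 m b * invPowIntegral c 2 a m := by ring
    _ < invPowIntegral c 1 m b * invPowIntegral c 2 a m :=
        mul_lt_mul_of_pos_right (mul_lt_invPowIntegral_one hc hpos hmono hm hmb)
          (invPowIntegral_pos hc hpos 2 ha ham)

end Moments

theorem sq_div_add_sq_div_sub_sq_div_add {x₁ x₂ y₁ y₂ : ℝ} (h₁ : y₁ ≠ 0) (h₂ : y₂ ≠ 0)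
    (h₁₂ : y₁ + y₂ ≠ 0) :
    x₁ ^ 2 / y₁ + x₂ ^ 2 / y₂ - (x₁ + x₂) ^ 2 / (y₁ + y₂)
      = (x₁ * y₂ - x₂ * y₁) ^ 2 / (y₁ * y₂ * (y₁ + y₂)) := by
  field_simp
  ring

theorem ne_of_mem_Ioo_min_max {a b m : ℝ} (hm : m ∈ Ioo (min a b) (max a b)) :
    a ≠ m ∧ m ≠ b ∧ a ≠ b := by
  rcases le_total a b with hab | hab
  · rw [min_eq_left hab, max_eq_right hab] at hm
    exact ⟨hm.1.ne, hm.2.ne, (hm.1.trans hm.2).ne⟩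
  · rw [min_eq_right hab, max_eq_left hab] at hm
    exact ⟨hm.2.ne', hm.1.ne', (hm.1.trans hm.2).ne'⟩

section Residual
variable {c : ℝ → ℝ}

theorem jumpResidual_swap (c : ℝ → ℝ) (a b : ℝ) : jumpResidual c b a = -jumpResidual c a b := by
  simp only [jumpResidual, invPowIntegral_swap c _ b a, neg_sq, div_neg]
  ring

theorem jumpResidual_add_sub (hc : Continuous c) (hpos : ∀ p > 0, 0 < c p) {a m b : ℝ}
    (ha : 0 < a) (hm : 0 < m) (hb : 0 < b) (ham : a ≠ m) (hmb : m ≠ b) (hab : a ≠ b) :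
    jumpResidual c a m + jumpResidual c m b - jumpResidual c a b
      = (invPowIntegral c 1 a m * invPowIntegral c 2 m b
          - invPowIntegral c 1 m b * invPowIntegral c 2 a m) ^ 2
        / (invPowIntegral c 2 a m * invPowIntegral c 2 m b
          * (invPowIntegral c 2 a m + invPowIntegral c 2 m b)) := by
  have h₁₂ := invPowIntegral_ne_zero hc hpos 2 ha hb hab
  rw [← invPowIntegral_add_adjacent hc hpos 2 ha hm hb] at h₁₂
  rw [← sq_div_add_sq_div_sub_sq_div_add (invPowIntegral_ne_zero hc hpos 2 ha hm ham)
    (invPowIntegral_ne_zero hc hpos 2 hm hb hmb) h₁₂, jumpResidual, jumpResidual, jumpResidual,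
    ← invPowIntegral_add_adjacent hc hpos 1 ha hm hb,
    ← invPowIntegral_add_adjacent hc hpos 2 ha hm hb]
  ring

theorem jumpResidual_nonpos (hc : Continuous c) (hpos : ∀ p > 0, 0 < c p) {a b : ℝ}
    (ha : 0 < a) (hab : a < b) : jumpResidual c a b ≤ 0 := by
  have h := (div_le_iff₀ (invPowIntegral_pos hc hpos 2 ha hab)).2
    (invPowIntegral_one_sq_le hc hpos ha hab.le)
  rw [jumpResidual]
  linarith

theorem abs_jumpResidual_add_lt_of_lt (hc : Continuous c) (hpos : ∀ p > 0, 0 < c p)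
    (hmono : StrictMonoOn c (Ioi 0)) {a m b : ℝ} (ha : 0 < a) (ham : a < m) (hmb : m < b) :
    |jumpResidual c a m + jumpResidual c m b| < |jumpResidual c a b| := by
  have hm := ha.trans ham
  have hdefect := jumpResidual_add_sub hc hpos ha hm (hm.trans hmb) ham.ne hmb.ne
    (ham.trans hmb).ne
  have hcross := invPowIntegral_mul_lt_mul hc hpos hmono ha ham hmb
  have hy₁ := invPowIntegral_pos hc hpos 2 ha ham
  have hy₂ := invPowIntegral_pos hc hpos 2 hm hmb
  have hdefect_pos : 0 < jumpResidual c a m + jumpResidual c m b - jumpResidual c a b := by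
    rw [hdefect]
    exact div_pos (sq_pos_of_neg (sub_neg.2 hcross)) (by positivity)
  have h₁ := jumpResidual_nonpos hc hpos ha ham
  have h₂ := jumpResidual_nonpos hc hpos hm hmb
  rw [abs_of_nonpos (add_nonpos h₁ h₂), abs_of_neg (by linarith)]
  linarith

theorem abs_jumpResidual_add_lt (hc : Continuous c) (hpos : ∀ p > 0, 0 < c p)
    (hmono : StrictMonoOn c (Ioi 0)) {a m b : ℝ} (ha : 0 < a) (hb : 0 < b)
    (hm : m ∈ Ioo (min a b) (max a b)) :
    |jumpResidual c a m + jumpResidual c m b| < |jumpResidual c a b| := by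
  rcases le_total a b with hab | hab
  · rw [min_eq_left hab, max_eq_right hab] at hm
    exact abs_jumpResidual_add_lt_of_lt hc hpos hmono ha hm.1 hm.2
  · rw [min_eq_right hab, max_eq_left hab] at hm
    rw [jumpResidual_swap c m a, jumpResidual_swap c b m, jumpResidual_swap c b a, ← neg_add,
      abs_neg, abs_neg, add_comm]
    exact abs_jumpResidual_add_lt_of_lt hc hpos hmono hb hm.1 hm.2

end Residual

theorem split_residual_decreases_general (c : ℝ → ℝ) (hc : Continuous c)
    (hpos : ∀ p > 0, 0 < c p)
    (hmono : StrictMonoOn c (Set.Ioi 0))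
    (pa pb pm : ℝ) (hpa : 0 < pa) (hpb : 0 < pb)
    (hm : pm ∈ Set.Ioo (min pa pb) (max pa pb)) :
    let I : ℕ → ℝ → ℝ → ℝ := fun k a b => ∫ p in a..b, (c p)^(-(k:ℤ))
    let R : ℝ → ℝ → ℝ := fun a b => ((I 1 a b)^2 / I 2 a b + a - b) / Real.sqrt 2
    (Real.sqrt 2 * (R pa pm + R pm pb - R pa pb) =
      (I 1 pa pm * I 2 pm pb - I 1 pm pb * I 2 pa pm)^2 /
        (I 2 pa pm * I 2 pm pb * (I 2 pa pm + I 2 pm pb))) ∧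
    |R pa pm + R pm pb| < |R pa pb| := by
  intro I R
  have hI : I = invPowIntegral c := rfl
  have hR : R = fun a b => jumpResidual c a b / Real.sqrt 2 := rfl
  simp only [hR, hI]
  obtain ⟨ham, hmb, hab⟩ := ne_of_mem_Ioo_min_max hm
  have hpm : 0 < pm := (lt_min hpa hpb).trans hm.1
  have hsqrt : 0 < Real.sqrt 2 := by positivity
  refine ⟨?_, ?_⟩
  · rw [← jumpResidual_add_sub hc hpos hpa hpm hpb ham hmb hab]
    field_simp
  · rw [← add_div, abs_div, abs_div, abs_of_pos hsqrt]
    exact div_lt_div_of_pos_right (abs_jumpResidual_add_lt hc hpos hmono hpa hpb hm) hsqrt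

/-- Splitting a monotone simple wave decreases the residual: the exact algebraic
identity for the difference of residuals, and the strict decrease of the absolute
split residual. -/
theorem split_residual_decreases (c : ℝ → ℝ) (hc : Continuous c)
    (hpos : ∀ p > 0, 0 < c p)
    (hmono : StrictMonoOn c (Set.Ioi 0))
    (pa pb pm : ℝ) (hpa : 0 < pa) (hpb : 0 < pb) (hne : pa ≠ pb)
    (hm : pm ∈ Set.Ioo (min pa pb) (max pa pb)) :
    let I : ℕ → ℝ → ℝ → ℝ := fun k a b => ∫ p in a..b, (c p)^(-(k:ℤ))
    let R : ℝ → ℝ → ℝ := fun a b => ((I 1 a b)^2 / I 2 a b + a - b) / Real.sqrt 2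
    (Real.sqrt 2 * (R pa pm + R pm pb - R pa pb) =
      (I 1 pa pm * I 2 pm pb - I 1 pm pb * I 2 pa pm)^2 /
        (I 2 pa pm * I 2 pm pb * (I 2 pa pm + I 2 pm pb))) ∧
    |R pa pm + R pm pb| < |R pa pb| :=
  split_residual_decreases_general c hc hpos hmono pa pb pm hpa hpb hm
end

section
/- In the p-system with acoustic impedance c(p), the least squared wavespeed and residual for a single jump approximating a simple wave are exactly a_* = ±(β+1)/(2⟨1/c⟩) and R_* = [p]((β-1)/2)(±1, -1)^T, where β = ⟨1/c⟩²/⟨1/c²⟩ and [p] = p_b - p_a. In particular |R_*| = |[p](β-1)|/√2. -/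
/-!
Writing `m = ⟨1/c⟩` and `t = a m ε`, the identity `ε² = 1` turns the squared residual into
`[p]² ((β - t)² + (1 - t)²)`: the sum of squared distances from `t` to the two points `β` and `1`.
It is minimised at their midpoint `t = (β + 1)/2`, i.e. at `a = a_*`, with minimum `[p]² (β - 1)² / 2`.
The only analytic input is `m > 0`, which makes `a_*` well defined.
-/

open Set intervalIntegral

theorem intervalAverage_pos {f : ℝ → ℝ} {a b : ℝ} (hab : a ≠ b)
    (hf : IntervalIntegrable f MeasureTheory.volume a b) (hpos : ∀ x ∈ uIoo a b, 0 < f x) :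
    0 < (∫ x in a..b, f x) / (b - a) := by
  wlog hlt : a < b generalizing a b
  · have hba : b < a := lt_of_le_of_ne (not_lt.1 hlt) hab.symm
    have := this hab.symm hf.symm (by rwa [uIoo_comm]) hba
    rwa [integral_symm, ← neg_sub b a, neg_div_neg_eq] at this
  refine div_pos (intervalIntegral_pos_of_pos_on hf (fun x hx => hpos x ?_) hlt) (sub_pos.2 hlt)
  rwa [uIoo_of_lt hlt]

theorem half_sq_sub_le_sq_sub_add_sq_sub (u v t : ℝ) :
    (u - v) ^ 2 / 2 ≤ (u - t) ^ 2 + (v - t) ^ 2 := by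
  nlinarith [sq_nonneg (2 * t - u - v)]

theorem residual_sq_add_sq {ε : ℝ} (hε : ε ^ 2 = 1) (j β μ : ℝ) :
    (j * (ε * β - μ)) ^ 2 + (j * (1 - μ * ε)) ^ 2 =
      j ^ 2 * ((β - μ * ε) ^ 2 + (1 - μ * ε) ^ 2) := by
  linear_combination j ^ 2 * (β ^ 2 - μ ^ 2) * hε

/-- For the p-system, the least squared wavespeed and residual of a single jump
approximating a simple wave are exactly `a_* = ±(β+1)/(2⟨1/c⟩)` and
`R_* = [p]((β-1)/2)(±1,-1)ᵀ`, with `|R_*| = |[p](β-1)|/√2`. -/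
theorem psystem_least_square_residual (c : ℝ → ℝ) (pa pb : ℝ) (hne : pa ≠ pb)
    (hc : ContinuousOn c (Set.uIcc pa pb))
    (hpos : ∀ p ∈ Set.uIcc pa pb, 0 < c p)
    (ε : ℝ) (hε : ε = 1 ∨ ε = -1) :
    let avg : (ℝ → ℝ) → ℝ := fun g => (∫ p in pa..pb, g p) / (pb - pa)
    let β := (avg (fun p => 1 / c p))^2 / avg (fun p => 1 / (c p)^2)
    let jp := pb - pa
    let R : ℝ → Fin 2 → ℝ := fun a =>
      ![jp * (ε * β - a * avg (fun p => 1 / c p)),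
        jp * (1 - a * avg (fun p => 1 / c p) * ε)]
    let astar := ε * (β + 1) / (2 * avg (fun p => 1 / c p))
    (∀ a : ℝ, Real.sqrt ((R astar 0)^2 + (R astar 1)^2)
        ≤ Real.sqrt ((R a 0)^2 + (R a 1)^2)) ∧
    (R astar 0 = jp * ((β - 1)/2) * ε ∧ R astar 1 = -(jp * ((β - 1)/2))) ∧
    Real.sqrt ((R astar 0)^2 + (R astar 1)^2) = |jp * (β - 1)| / Real.sqrt 2 := by
  intro avg β jp R astar
  set m := avg fun p => 1 / c p
  have hm : 0 < m := intervalAverage_pos hne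
    (continuousOn_const.div hc fun p hp => (hpos p hp).ne').intervalIntegrable
    (fun p hp => one_div_pos.2 (hpos p (uIoo_subset_uIcc_self hp)))
  have hR (a : ℝ) : R a 0 = jp * (ε * β - a * m) ∧ R a 1 = jp * (1 - a * m * ε) := ⟨rfl, rfl⟩
  have hastar : astar = ε * (β + 1) / (2 * m) := rfl
  clear_value R astar β jp m
  have hε2 : ε ^ 2 = 1 := by rcases hε with rfl | rfl <;> norm_num
  have hstar : astar * m * ε = (β + 1) / 2 := by
    rw [hastar]; field_simp; linear_combination (β + 1) * hε2
  have hnorm (a : ℝ) :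
      R a 0 ^ 2 + R a 1 ^ 2 = jp ^ 2 * ((β - a * m * ε) ^ 2 + (1 - a * m * ε) ^ 2) := by
    rw [(hR a).1, (hR a).2]; exact residual_sq_add_sq hε2 jp β (a * m)
  have hmin : R astar 0 ^ 2 + R astar 1 ^ 2 = (jp * (β - 1)) ^ 2 / 2 := by
    rw [hnorm, hstar]; ring
  refine ⟨fun a => Real.sqrt_le_sqrt ?_, ⟨?_, ?_⟩, ?_⟩
  · rw [hmin, hnorm, mul_pow, mul_div_assoc]
    exact mul_le_mul_of_nonneg_left (half_sq_sub_le_sq_sub_add_sq_sub β 1 _) (sq_nonneg jp)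
  · rw [(hR astar).1]
    linear_combination (-jp * ε) * hstar + jp * astar * m * hε2
  · rw [(hR astar).2, hstar]; ring
  · rw [hmin, Real.sqrt_div (sq_nonneg _), Real.sqrt_sq_eq_abs]
end
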